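/- Let A be a finite connected graph and fix three vertices a, b, z ∈ A. Let i be a flow from a to {b, z} such that i(a,x) ≥ 0, i(z,x) ≤ 0, and i(b,x) ≤ 0 for all x, and such that i has no cycle (no directed cycle of edges all carrying strictly positive flow). Then there exists a flow j on A from a to b such that: (a) j(x,b) = i(x,b) for all x, so j has strength i(b); (b) j(x,z) = 0 for all x; (c) i(x,y)·j(x,y) ≥ 0 for all x,y; (d) |j(x,y)| ≤ |i(x,y)| for all x,y; (e) |j(x,y)| ≤ i(b) for all x,y. -/

import Mathlib

/-!
Let `p x` be the probability that the walk which leaves each vertex `x` along `x → y` with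
probability proportional to `i(x,y)⁺` reaches `b`. Since `i` has no cycle this walk terminates, so
`p` is defined by recursion along `i`; moreover `p b = 1`, `p z = 0` and `0 ≤ p ≤ 1`. The flow
`j(x,y) = i(x,y)⁺ p(y) - i(y,x)⁺ p(x)` is the part of `i` that ends in `b`: it satisfies
Kirchhoff's law wherever `i` does because `p` is harmonic for the walk, and it has the direction of
`i` and at most its size because `0 ≤ p ≤ 1`.

For the bound by the strength, take `j(x,y) > 0` and let `R` be the set of vertices reachable
from `y` along edges of positive `j`-flow. As `j` has no cycle, `x ∉ R`, and `a ∉ R` since nothing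
flows into `a`. All flow across the boundary of `R` goes inward, `j(x,y)` of it along `(x,y)`, so
the net inflow into `R`, which is `i(b)` or `0` according as `b ∈ R`, is at least `j(x,y)`.
-/

open Finset Relation

def HasCycle {α : Type*} (r : α → α → Prop) : Prop :=
  ∃ (n : ℕ) (c : ℕ → α), 0 < n ∧ c 0 = c n ∧ ∀ k < n, r (c k) (c (k + 1))

section HasCycle

variable {α : Type*} {r s : α → α → Prop}

theorem HasCycle.mono (hrs : ∀ x y, r x y → s x y) : HasCycle r → HasCycle s :=
  fun ⟨n, c, hn, hc, hr⟩ => ⟨n, c, hn, hc, fun k hk => hrs _ _ (hr k hk)⟩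

theorem Relation.TransGen.exists_chain {u w : α} (h : TransGen r u w) :
    ∃ (n : ℕ) (c : ℕ → α), 0 < n ∧ c 0 = u ∧ c n = w ∧ ∀ k < n, r (c k) (c (k + 1)) := by
  induction h with
  | @single w huw =>
    refine ⟨1, fun k => if k = 0 then u else w, one_pos, rfl, rfl, fun k hk => ?_⟩
    obtain rfl : k = 0 := by omega
    simpa using huw
  | @tail v w _ hvw ih =>
    obtain ⟨n, c, hn, hc0, hcn, hr⟩ := ih
    refine ⟨n + 1, fun k => if k ≤ n then c k else w, n.succ_pos, by simpa using hc0,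
      by simp, fun k hk => ?_⟩
    rcases Nat.lt_or_ge k n with hkn | hkn
    · simpa [hkn.le, Nat.succ_le_of_lt hkn] using hr k hkn
    · obtain rfl : k = n := by omega
      simpa [hcn] using hvw

theorem hasCycle_of_transGen {v : α} (h : TransGen r v v) : HasCycle r := by
  obtain ⟨n, c, hn, hc0, hcn, hr⟩ := h.exists_chain
  exact ⟨n, c, hn, hc0.trans hcn.symm, hr⟩

theorem wellFounded_flip_of_not_hasCycle [Finite α] (h : ¬HasCycle r) :
    WellFounded (flip r) := by
  have : IsTrans α (TransGen (flip r)) := ⟨fun _ _ _ => TransGen.trans⟩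
  have : Std.Irrefl (TransGen (flip r)) :=
    ⟨fun _ hv => h (hasCycle_of_transGen (transGen_swap.mp hv))⟩
  exact Subrelation.wf TransGen.single (Finite.wellFounded_of_trans_of_irrefl _)

end HasCycle

section HittingPotential

variable {V : Type*} [Fintype V] {i : V → V → ℝ} {b : V} {p : V → ℝ}

/-- A vertex other than `b` without outflow gets `p x = 0`, through the junk value of division by
zero. -/
def IsHittingPotential (i : V → V → ℝ) (b : V) (p : V → ℝ) : Prop :=
  p b = 1 ∧ ∀ x ≠ b, p x = (∑ y, (i x y)⁺ * p y) / ∑ y, (i x y)⁺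

theorem exists_isHittingPotential (hwf : WellFounded (flip fun x y => 0 < i x y)) (b : V) :
    ∃ p, IsHittingPotential i b p := by
  classical
  refine ⟨hwf.fix fun x rec => if x = b then 1 else
    (∑ y, if h : 0 < i x y then i x y * rec y h else 0) / ∑ y, (i x y)⁺, ?_, fun x hx => ?_⟩
  · rw [hwf.fix_eq, if_pos rfl]
  · rw [hwf.fix_eq, if_neg hx]
    congr 1
    refine sum_congr rfl fun y _ => ?_
    split_ifs with h
    · rw [posPart_eq_self.2 h.le]
    · rw [posPart_eq_zero.2 (not_lt.1 h), zero_mul]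

namespace IsHittingPotential

theorem mem_Icc (hwf : WellFounded (flip fun x y => 0 < i x y)) (hp : IsHittingPotential i b p)
    (x : V) : p x ∈ Set.Icc 0 1 := by
  induction x using hwf.induction with
  | _ x ih =>
  by_cases hx : x = b
  · simp [hx, hp.1]
  have hterm : ∀ y, 0 ≤ (i x y)⁺ * p y ∧ (i x y)⁺ * p y ≤ (i x y)⁺ := by
    intro y
    rcases le_or_gt (i x y) 0 with h | h
    · simp [posPart_eq_zero.2 h]
    · exact ⟨mul_nonneg (posPart_nonneg _) (ih y h).1,
        mul_le_of_le_one_right (posPart_nonneg _) (ih y h).2⟩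
  have hden : 0 ≤ ∑ y, (i x y)⁺ := sum_nonneg fun y _ => posPart_nonneg _
  rw [hp.2 x hx]
  exact ⟨div_nonneg (sum_nonneg fun y _ => (hterm y).1) hden,
    div_le_one_of_le₀ (sum_le_sum fun y _ => (hterm y).2) hden⟩

theorem eq_zero (hp : IsHittingPotential i b p) {x : V} (hx : x ≠ b) (hout : ∀ y, i x y ≤ 0) :
    p x = 0 := by
  simp [hp.2 x hx, posPart_eq_zero.2 (hout _)]

theorem mul_eq_sum (hp : IsHittingPotential i b p) {x : V} (hx : x ≠ b) :
    (∑ y, (i x y)⁺) * p x = ∑ y, (i x y)⁺ * p y := by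
  rcases eq_or_ne (∑ y, (i x y)⁺) 0 with h | h
  · have hzero := (sum_eq_zero_iff_of_nonneg fun y _ => posPart_nonneg (i x y)).1 h
    simp [hzero]
  · rw [hp.2 x hx, mul_div_cancel₀ _ h]

end IsHittingPotential

end HittingPotential

section PotentialFlow

variable {V : Type*} {i : V → V → ℝ} {p : V → ℝ}

def potentialFlow (i : V → V → ℝ) (p : V → ℝ) (x y : V) : ℝ :=
  (i x y)⁺ * p y - (i y x)⁺ * p x

theorem potentialFlow_antisymm (x y : V) : potentialFlow i p x y = -potentialFlow i p y x := by
  unfold potentialFlow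
  ring

theorem potentialFlow_eq_zero_of_nonpos {x : V} (hpx : p x = 0) (hout : ∀ y, i x y ≤ 0)
    (y : V) : potentialFlow i p x y = 0 := by
  simp [potentialFlow, posPart_eq_zero.2 (hout y), hpx]

variable (hskew : ∀ x y, i x y = -i y x)
include hskew

theorem potentialFlow_of_nonneg {x y : V} (h : 0 ≤ i x y) :
    potentialFlow i p x y = i x y * p y := by
  have hyx : (i y x)⁺ = 0 := posPart_eq_zero.2 (by linarith [hskew x y])
  simp [potentialFlow, posPart_eq_self.2 h, hyx]

theorem exists_potentialFlow_eq_mul (hp : ∀ x, p x ∈ Set.Icc 0 1) (x y : V) :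
    ∃ t ∈ Set.Icc (0 : ℝ) 1, potentialFlow i p x y = i x y * t := by
  rcases le_total 0 (i x y) with h | h
  · exact ⟨p y, hp y, potentialFlow_of_nonneg hskew h⟩
  · refine ⟨p x, hp x, ?_⟩
    rw [potentialFlow_antisymm, potentialFlow_of_nonneg hskew (by linarith [hskew x y]),
      hskew y x]
    ring

theorem mul_potentialFlow_nonneg (hp : ∀ x, p x ∈ Set.Icc 0 1) (x y : V) :
    0 ≤ i x y * potentialFlow i p x y := by
  obtain ⟨t, ht, h⟩ := exists_potentialFlow_eq_mul hskew hp x y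
  rw [h, ← mul_assoc]
  exact mul_nonneg (mul_self_nonneg _) ht.1

theorem abs_potentialFlow_le (hp : ∀ x, p x ∈ Set.Icc 0 1) (x y : V) :
    |potentialFlow i p x y| ≤ |i x y| := by
  obtain ⟨t, ht, h⟩ := exists_potentialFlow_eq_mul hskew hp x y
  rw [h, abs_mul, abs_of_nonneg ht.1]
  exact mul_le_of_le_one_right (abs_nonneg _) ht.2

theorem pos_of_potentialFlow_pos (hp : ∀ x, p x ∈ Set.Icc 0 1) {x y : V}
    (h : 0 < potentialFlow i p x y) : 0 < i x y := by
  obtain ⟨t, ht, heq⟩ := exists_potentialFlow_eq_mul hskew hp x y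
  exact pos_of_mul_pos_left (heq ▸ h) ht.1

theorem sum_potentialFlow_eq_zero [Fintype V] {x : V} (hnode : ∑ y, i x y = 0)
    (hharm : (∑ y, (i x y)⁺) * p x = ∑ y, (i x y)⁺ * p y) :
    ∑ y, potentialFlow i p x y = 0 := by
  have hin : ∑ y, (i y x)⁺ = ∑ y, (i x y)⁺ := by
    have h : ∀ y, (i y x)⁺ = (i x y)⁺ - i x y := fun y => by
      rw [hskew y x, posPart_neg]
      linarith [posPart_sub_negPart (i x y)]
    rw [sum_congr rfl fun y _ => h y, sum_sub_distrib, hnode, sub_zero]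
  simp only [potentialFlow, sum_sub_distrib, ← sum_mul, hin, hharm, sub_self]

end PotentialFlow

section Cut

variable {V : Type*} {j : V → V → ℝ}

theorem sum_sum_eq_zero_of_antisymm (hj : ∀ x y, j x y = -j y x) (R : Finset V) :
    ∑ u ∈ R, ∑ v ∈ R, j u v = 0 := by
  have h : ∑ u ∈ R, ∑ v ∈ R, j u v = ∑ u ∈ R, ∑ v ∈ R, -j u v := by
    rw [sum_comm]
    exact sum_congr rfl fun u _ => sum_congr rfl fun v _ => hj v u
  simp only [sum_neg_distrib] at h
  linarith

theorem sum_sum_eq_sum_sum_compl_of_antisymm [Fintype V] [DecidableEq V] (hj : ∀ x y, j x y = -j y x)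
    (R : Finset V) : ∑ u ∈ R, ∑ v, j u v = ∑ u ∈ R, ∑ v ∈ Rᶜ, j u v := by
  simp_rw [← sum_add_sum_compl R (j _)]
  rw [sum_add_distrib, sum_sum_eq_zero_of_antisymm hj, zero_add]

variable [Fintype V] {a b : V} (hj : ∀ x y, j x y = -j y x) (hcyc : ¬HasCycle fun x y => 0 < j x y)
  (hnode : ∀ x, x ≠ a → x ≠ b → ∑ y, j x y = 0) (hsrc : ∀ x, j x a ≤ 0)
include hj hcyc hnode hsrc

theorem le_sum_apply_sink_of_pos {x₀ y₀ : V} (hpos : 0 < j x₀ y₀) : j x₀ y₀ ≤ ∑ u, j u b := by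
  classical
  set R := univ.filter (ReflTransGen (fun u v => 0 < j u v) y₀)
  have hyR : y₀ ∈ R := mem_filter.2 ⟨mem_univ _, ReflTransGen.refl⟩
  have hxR : x₀ ∉ R := fun h =>
    hcyc (hasCycle_of_transGen (TransGen.head' hpos (mem_filter.1 h).2))
  have haR : a ∉ R := fun h => by
    rcases (mem_filter.1 h).2.cases_tail with rfl | ⟨c, -, hc⟩
    · linarith [hsrc x₀]
    · linarith [hsrc c]
  have hout : ∀ u ∈ R, ∀ v ∈ Rᶜ, j u v ≤ 0 := fun u hu v hv => not_lt.1 fun h =>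
    mem_compl.1 hv (mem_filter.2 ⟨mem_univ _, (mem_filter.1 hu).2.tail h⟩)
  have hcut : ∑ u ∈ R, ∑ v, j u v ≤ -j x₀ y₀ := by
    rw [sum_sum_eq_sum_sum_compl_of_antisymm hj, ← hj y₀ x₀]
    calc ∑ u ∈ R, ∑ v ∈ Rᶜ, j u v ≤ ∑ v ∈ Rᶜ, j y₀ v := by
          simpa using sum_le_sum_of_subset_of_nonpos' (singleton_subset_iff.2 hyR)
            fun u hu _ => sum_nonpos (hout u hu)
      _ ≤ j y₀ x₀ := by
          simpa using sum_le_sum_of_subset_of_nonpos' (singleton_subset_iff.2 (mem_compl.2 hxR))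
            fun v hv _ => hout y₀ hyR v hv
  by_cases hbR : b ∈ R
  · have hR : ∑ u ∈ R, ∑ v, j u v = -∑ u, j u b := by
      rw [sum_eq_single_of_mem b hbR fun u hu hub => hnode u (ne_of_mem_of_not_mem hu haR) hub,
        ← sum_neg_distrib]
      exact sum_congr rfl fun v _ => hj b v
    linarith
  · have hR : ∑ u ∈ R, ∑ v, j u v = 0 := sum_eq_zero fun u hu =>
      hnode u (ne_of_mem_of_not_mem hu haR) (ne_of_mem_of_not_mem hu hbR)
    linarith

theorem abs_le_sum_apply_sink (hS : 0 ≤ ∑ u, j u b) (x y : V) : |j x y| ≤ ∑ u, j u b := by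
  have hle : ∀ x y, j x y ≤ ∑ u, j u b := fun x y =>
    (le_or_gt (j x y) 0).elim (fun h => h.trans hS)
      (le_sum_apply_sink_of_pos hj hcyc hnode hsrc)
  exact abs_le.2 ⟨by linarith [hle y x, hj x y], hle x y⟩

end Cut

theorem stmt6_general {V : Type*} [Fintype V]
    (G : SimpleGraph V)
    (a b z : V) (hbz : b ≠ z)
    (i : V → V → ℝ)
    (hskew : ∀ x y, i x y = - i y x)
    (hsupp : ∀ x y, ¬ G.Adj x y → i x y = 0)
    (hnode : ∀ x, x ≠ a → x ≠ b → x ≠ z → ∑ y, i x y = 0)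
    (hsrc : ∀ x, 0 ≤ i a x)
    (hsinkz : ∀ x, i z x ≤ 0)
    (hsinkb : ∀ x, i b x ≤ 0)
    (hnocycle : ¬ ∃ (n : ℕ) (c : ℕ → V), 0 < n ∧ c 0 = c n ∧ ∀ k < n, 0 < i (c k) (c (k+1))) :
    ∃ j : V → V → ℝ,
      (∀ x y, j x y = - j y x) ∧
      (∀ x y, ¬ G.Adj x y → j x y = 0) ∧
      (∀ x, x ≠ a → x ≠ b → ∑ y, j x y = 0) ∧
      (∀ x, j x b = i x b) ∧
      (∀ x, j x z = 0) ∧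
      (∀ x y, 0 ≤ i x y * j x y) ∧
      (∀ x y, |j x y| ≤ |i x y|) ∧
      (∀ x y, |j x y| ≤ ∑ u, i u b) := by
  have hcyc : ¬HasCycle fun x y => 0 < i x y := hnocycle
  have hwf := wellFounded_flip_of_not_hasCycle hcyc
  obtain ⟨p, hp⟩ := exists_isHittingPotential hwf b
  have hp01 := hp.mem_Icc hwf
  have hzout := potentialFlow_eq_zero_of_nonpos (hp.eq_zero hbz.symm hsinkz) hsinkz
  have hintob : ∀ x, 0 ≤ i x b := fun x => by linarith [hskew x b, hsinkb x]
  have hjb : ∀ x, potentialFlow i p x b = i x b := fun x => by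
    rw [potentialFlow_of_nonneg hskew (hintob x), hp.1, mul_one]
  have hjnode : ∀ x, x ≠ a → x ≠ b → ∑ y, potentialFlow i p x y = 0 := fun x hxa hxb => by
    by_cases hxz : x = z
    · exact sum_eq_zero fun y _ => hxz ▸ hzout y
    · exact sum_potentialFlow_eq_zero hskew (hnode x hxa hxb hxz) (hp.mul_eq_sum hxb)
  have hjsrc : ∀ x, potentialFlow i p x a ≤ 0 := fun x => by
    rw [potentialFlow_antisymm, potentialFlow_of_nonneg hskew (hsrc x)]
    exact neg_nonpos.2 (mul_nonneg (hsrc x) (hp01 x).1)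
  have hjcyc : ¬HasCycle fun x y => 0 < potentialFlow i p x y := fun h =>
    hcyc (h.mono fun _ _ => pos_of_potentialFlow_pos hskew hp01)
  have hstrength : ∑ u, potentialFlow i p u b = ∑ u, i u b := sum_congr rfl fun u _ => hjb u
  refine ⟨potentialFlow i p, potentialFlow_antisymm, fun x y hxy => ?_, hjnode, hjb,
    fun x => by rw [potentialFlow_antisymm, hzout, neg_zero], mul_potentialFlow_nonneg hskew hp01,
    abs_potentialFlow_le hskew hp01, ?_⟩
  · exact abs_nonpos_iff.1 ((abs_potentialFlow_le hskew hp01 x y).trans_eq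
      (by rw [hsupp x y hxy, abs_zero]))
  · rw [← hstrength]
    exact abs_le_sum_apply_sink potentialFlow_antisymm hjcyc hjnode hjsrc
      (hstrength ▸ sum_nonneg fun u _ => hintob u)

/-- **Flow decomposition lemma.** Let `i` be a flow from `a` to `{b, z}` on a finite connected
graph, with `a` a source and `b, z` sinks, and with no (strictly positive) directed cycle.
Then there is a flow `j` from `a` to `b` which matches `i` on the edges into `b`, puts nothing
into `z`, has the same direction as `i` on each edge, and satisfies `|j| ≤ |i|` edgewise and
`|j| ≤ i(b)` (the strength of `j`). -/
theorem stmt6 {V : Type*} [Fintype V]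
    (G : SimpleGraph V) (hconn : G.Connected)
    (a b z : V) (hab : a ≠ b) (haz : a ≠ z) (hbz : b ≠ z)
    (i : V → V → ℝ)
    (hskew : ∀ x y, i x y = - i y x)
    (hsupp : ∀ x y, ¬ G.Adj x y → i x y = 0)
    (hnode : ∀ x, x ≠ a → x ≠ b → x ≠ z → ∑ y, i x y = 0)
    (hsrc : ∀ x, 0 ≤ i a x)
    (hsinkz : ∀ x, i z x ≤ 0)
    (hsinkb : ∀ x, i b x ≤ 0)
    (hnocycle : ¬ ∃ (n : ℕ) (c : ℕ → V), 0 < n ∧ c 0 = c n ∧ ∀ k < n, 0 < i (c k) (c (k+1))) :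
    ∃ j : V → V → ℝ,
      (∀ x y, j x y = - j y x) ∧
      (∀ x y, ¬ G.Adj x y → j x y = 0) ∧
      (∀ x, x ≠ a → x ≠ b → ∑ y, j x y = 0) ∧
      (∀ x, j x b = i x b) ∧
      (∀ x, j x z = 0) ∧
      (∀ x y, 0 ≤ i x y * j x y) ∧
      (∀ x y, |j x y| ≤ |i x y|) ∧
      (∀ x y, |j x y| ≤ ∑ u, i u b) :=
  stmt6_general G a b z hbz i hskew hsupp hnode hsrc hsinkz hsinkb hnocycle
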